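/- arXiv:1008.2005 — 5 statements merged into one kernel-verified Lean document; each statement's English description precedes it below -/
import Mathlib

section
/- Let f : 2^X → ℝ be a nonnegative monotone submodular function on a finite set X with cost function c : X → ℝ_{>0}, let η ∈ ℝ, and let S* ⊆ X satisfy f(S*) ≥ η. Define g(S) = min(f(S), η) and, for any S ⊆ X with g(S) < η, set η_S = η − g(S). Then there exists an element x ∈ X \ S such that (g(S ∪ {x}) − g(S))/c(x) ≥ η_S / c(S*), where c(S*) = Σ_{y ∈ S*} c(y). -/
/-!
Truncating at `η` keeps `f` monotone and submodular, so the marginal gains of `g = min f η` at `S`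
over the elements of `S* \ S` add up to at least `g (S ∪ S*) - g S = η - g S`. Their total cost is
at most `c(S*)`, so one of them has gain per unit cost at least `(η - g S) / c(S*)`.
-/

open Finset

def IsSubmodular {α : Type*} [DecidableEq α] (f : Finset α → ℝ) : Prop :=
  ∀ (A B : Finset α) (w : α), A ⊆ B → f (insert w B) - f B ≤ f (insert w A) - f A

namespace IsSubmodular

variable {α : Type*} [DecidableEq α] {f : Finset α → ℝ}

theorem min_const (hf : IsSubmodular f) (hmono : Monotone f) (η : ℝ) :
    IsSubmodular fun A => min (f A) η := by
  intro A B w hAB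
  rcases le_or_gt η (f B) with hηB | hBη
  · have hgB : min (f (insert w B)) η - min (f B) η = 0 := by
      rw [min_eq_right hηB, min_eq_right (hηB.trans (hmono (subset_insert w B))), sub_self]
    rw [hgB, sub_nonneg]
    exact min_le_min_right η (hmono (subset_insert w A))
  · have hAη : f A ≤ η := (hmono hAB).trans hBη.le
    calc min (f (insert w B)) η - min (f B) η
        = min (f (insert w B) - f B) (η - f B) := by rw [min_eq_left hBη.le, min_sub_sub_right]
      _ ≤ min (f (insert w A) - f A) (η - f A) :=
          min_le_min (hf A B w hAB) (by linarith [hmono hAB])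
      _ = min (f (insert w A)) η - min (f A) η := by rw [min_eq_left hAη, min_sub_sub_right]

theorem sub_le_sum_marginal (hf : IsSubmodular f) (S T : Finset α) :
    f (S ∪ T) - f S ≤ ∑ x ∈ T, (f (insert x S) - f S) := by
  induction T using Finset.induction_on with
  | empty => simp
  | insert a T ha ih =>
    rw [sum_insert ha, union_insert]
    linarith [hf S (S ∪ T) a subset_union_left]

end IsSubmodular

theorem Finset.exists_div_le_div_of_le_sum {ι : Type*} {s : Finset ι} {a c : ι → ℝ} {b C : ℝ}
    (hs : s.Nonempty) (hc : ∀ i ∈ s, 0 < c i) (hb : 0 ≤ b) (hC : ∑ i ∈ s, c i ≤ C)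
    (h : b ≤ ∑ i ∈ s, a i) : ∃ i ∈ s, b / C ≤ a i / c i := by
  have hC0 : 0 < C := (sum_pos hc hs).trans_le hC
  have hsum : ∑ i ∈ s, b / C * c i ≤ ∑ i ∈ s, a i :=
    calc ∑ i ∈ s, b / C * c i = b / C * ∑ i ∈ s, c i := by rw [mul_sum]
      _ ≤ b / C * C := mul_le_mul_of_nonneg_left hC (div_nonneg hb hC0.le)
      _ = b := div_mul_cancel₀ b hC0.ne'
      _ ≤ ∑ i ∈ s, a i := h
  obtain ⟨i, hi, hle⟩ := exists_le_of_sum_le hs hsum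
  exact ⟨i, hi, (le_div_iff₀ (hc i hi)).2 hle⟩

theorem greedy_progress_general {X : Type*} [DecidableEq X]
    (f : Finset X → ℝ) (c : X → ℝ) (η : ℝ) (Sstar S : Finset X)
    (hmono : ∀ A B : Finset X, A ⊆ B → f A ≤ f B)
    (hsub : ∀ (A B : Finset X) (w : X), A ⊆ B →
      f (insert w B) - f B ≤ f (insert w A) - f A)
    (hc : ∀ v : X, 0 < c v)
    (hstar : η ≤ f Sstar)
    (hS : min (f S) η < η) :
    ∃ x ∉ S, (η - min (f S) η) / (∑ y ∈ Sstar, c y) ≤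
      (min (f (insert x S)) η - min (f S) η) / c x := by
  have hg : IsSubmodular fun A => min (f A) η := IsSubmodular.min_const hsub hmono η
  have hgap : η - min (f S) η ≤ ∑ y ∈ Sstar \ S, (min (f (insert y S)) η - min (f S) η) := by
    have hfull : min (f (S ∪ Sstar)) η = η :=
      min_eq_right (hstar.trans (hmono _ _ subset_union_right))
    simpa only [union_sdiff_self_eq_union, hfull] using hg.sub_le_sum_marginal S (Sstar \ S)
  have hT : (Sstar \ S).Nonempty := by
    rw [nonempty_iff_ne_empty, Ne, sdiff_eq_empty_iff_subset]
    intro hsubset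
    exact hS.ne (min_eq_right (hstar.trans (hmono _ _ hsubset)))
  obtain ⟨x, hx, hratio⟩ := exists_div_le_div_of_le_sum hT (fun y _ => hc y)
    (sub_nonneg.2 (min_le_right _ _))
    (sum_le_sum_of_subset_of_nonneg sdiff_subset fun y _ _ => (hc y).le) hgap
  exact ⟨x, (mem_sdiff.1 hx).2, hratio⟩

/-- Greedy progress lemma: there is an element whose marginal gain (w.r.t. `g = min (f ·) η`)
per unit cost is at least the remaining shortfall divided by the cost of an optimal set. -/
theorem greedy_progress {X : Type*} [DecidableEq X] [Fintype X]
    (f : Finset X → ℝ) (c : X → ℝ) (η : ℝ) (Sstar S : Finset X)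
    (hnn : ∀ A : Finset X, 0 ≤ f A)
    (hmono : ∀ A B : Finset X, A ⊆ B → f A ≤ f B)
    (hsub : ∀ (A B : Finset X) (w : X), A ⊆ B →
      f (insert w B) - f B ≤ f (insert w A) - f A)
    (hc : ∀ v : X, 0 < c v)
    (hstar : η ≤ f Sstar)
    (hS : min (f S) η < η) :
    ∃ x ∉ S, (η - min (f S) η) / (∑ y ∈ Sstar, c y) ≤
      (min (f (insert x S)) η - min (f S) η) / c x :=
  greedy_progress_general f c η Sstar S hmono hsub hc hstar hS
end

section
/- Let f : 2^X → ℝ be a nonnegative monotone submodular function with f(∅) = 0 on a finite set X, with positive cost function c, threshold η > 0, and shortfall ε with 0 < ε < η. Suppose there exists S* ⊆ X with f(S*) ≥ η, and let κ = c(S*). Run the greedy algorithm that, starting from S = ∅, repeatedly adds the element x maximizing (min(f(S ∪ {x}), η) − min(f(S), η))/c(x), until min(f(S), η) ≥ η − ε. Then the greedy algorithm terminates with a set S satisfying f(S) ≥ η − ε and c(S) ≤ κ · (1 + ln(η/ε)). -/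
/-!
Write `g = min f η`; it is again monotone and submodular, and `g (S ∪ S*) = η` for every `S`.
By submodularity the deficit `η - g S` is at most the sum of the marginal gains of the elements
of `S*`, so the greedy element `x` has gain per unit cost at least `(η - g S) / κ`. Each step
therefore multiplies the deficit by at most `1 - c x / κ ≤ exp (-c x / κ)`, and the deficit after
spending `C` is at most `η · exp (-C / κ)`. Before the last step the deficit still exceeds `ε`,
so the cost spent so far is below `κ ln (η / ε)`; the last element costs at most `κ`.
-/

open Finset Real

lemma min_sub_min_le_min_sub_min {a b a' b' η : ℝ} (hab : a ≤ b) (hb : b ≤ b')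
    (hgain : b' - b ≤ a' - a) :
    min b' η - min b η ≤ min a' η - min a η := by
  simp only [min_def]
  split_ifs <;> linarith

lemma le_mul_exp_neg_div_of_mul_le {d d' a κ : ℝ} (hκ : 0 < κ) (hd : 0 ≤ d)
    (h : d * a ≤ κ * (d - d')) : d' ≤ d * exp (-(a / κ)) := by
  have hdecr : d * (a / κ) ≤ d - d' := by
    rw [mul_div_assoc', div_le_iff₀ hκ]
    linarith
  calc d' ≤ d * (1 - a / κ) := by linarith [mul_one_sub d (a / κ)]
    _ ≤ d * exp (-(a / κ)) :=
      mul_le_mul_of_nonneg_left (by linarith [add_one_le_exp (-(a / κ))]) hd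

lemma lt_mul_log_div_of_lt_mul_exp {ε η C κ : ℝ} (hε : 0 < ε) (hκ : 0 < κ)
    (h : ε < η * exp (-(C / κ))) : C < κ * log (η / ε) := by
  have hexp : exp (C / κ) < η / ε := by
    rw [lt_div_iff₀ hε]
    calc exp (C / κ) * ε < exp (C / κ) * (η * exp (-(C / κ))) :=
          mul_lt_mul_of_pos_left h (exp_pos _)
      _ = η := by rw [mul_left_comm, ← exp_add, add_neg_cancel, exp_zero, mul_one]
  have hηε : 0 < η / ε := (exp_pos _).trans hexp
  exact (div_lt_iff₀' hκ).1 ((lt_log_iff_exp_lt hηε).2 hexp)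

lemma exists_of_card_lt_card_succ {X : Type*} [Fintype X] (seq : ℕ → Finset X) (P : ℕ → Prop)
    (hgrow : ∀ i, ¬ P i → #(seq i) < #(seq (i + 1))) : ∃ i, P i := by
  by_contra! hnever
  have hcard : ∀ i, i ≤ #(seq i) := by
    intro i
    induction i with
    | zero => exact Nat.zero_le _
    | succ i ih => exact ih.trans_lt (hgrow i (hnever i))
  have := hcard (Fintype.card X + 1)
  have := card_le_univ (seq (Fintype.card X + 1))
  omega

section Greedy

variable {X : Type*} [DecidableEq X] (g : Finset X → ℝ) (c : X → ℝ)

lemma sub_le_sum_marginal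
    (hsub : ∀ (S T : Finset X) (w : X), S ⊆ T → g (insert w T) - g T ≤ g (insert w S) - g S)
    (S T : Finset X) :
    g (S ∪ T) - g S ≤ ∑ w ∈ T, (g (insert w S) - g S) := by
  induction T using Finset.induction_on with
  | empty => simp
  | insert a T haT ih =>
    rw [union_insert, sum_insert haT]
    linarith [hsub S (S ∪ T) a subset_union_left]

lemma deficit_mul_cost_le_mul_gain
    (hmono : ∀ S T : Finset X, S ⊆ T → g S ≤ g T)
    (hsub : ∀ (S T : Finset X) (w : X), S ⊆ T → g (insert w T) - g T ≤ g (insert w S) - g S)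
    (hc : ∀ v, 0 < c v) {η : ℝ} {S Sstar : Finset X} (hcover : η ≤ g (S ∪ Sstar)) {x : X}
    (hx : ∀ w ∉ S, (g (insert w S) - g S) / c w ≤ (g (insert x S) - g S) / c x) :
    (η - g S) * c x ≤ (∑ v ∈ Sstar, c v) * (g (insert x S) - g S) := by
  set r := (g (insert x S) - g S) / c x
  have hr : 0 ≤ r := div_nonneg (sub_nonneg.2 (hmono _ _ (subset_insert x S))) (hc x).le
  have hgain : ∀ w ∈ Sstar, g (insert w S) - g S ≤ c w * r := by
    intro w _
    by_cases hwS : w ∈ S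
    · rw [insert_eq_of_mem hwS, sub_self]
      exact mul_nonneg (hc w).le hr
    · rw [mul_comm, ← div_le_iff₀ (hc w)]
      exact hx w hwS
  have hdeficit : η - g S ≤ (∑ v ∈ Sstar, c v) * r :=
    calc η - g S ≤ ∑ w ∈ Sstar, (g (insert w S) - g S) := by
          linarith [sub_le_sum_marginal g hsub S Sstar]
      _ ≤ ∑ w ∈ Sstar, c w * r := sum_le_sum hgain
      _ = (∑ v ∈ Sstar, c v) * r := (sum_mul ..).symm
  calc (η - g S) * c x ≤ (∑ v ∈ Sstar, c v) * r * c x :=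
        mul_le_mul_of_nonneg_right hdeficit (hc x).le
    _ = (∑ v ∈ Sstar, c v) * (g (insert x S) - g S) := by
        rw [mul_assoc, div_mul_cancel₀ _ (hc x).ne']

lemma deficit_le_mul_exp_neg_cost {η θ κ : ℝ} (hκ : 0 < κ) (hθη : θ ≤ η) (hg0 : g ∅ = 0)
    (seq : ℕ → Finset X) (pick : ℕ → X) (hseq0 : seq 0 = ∅)
    (hstep : ∀ i, g (seq i) < θ → pick i ∉ seq i ∧ seq (i + 1) = insert (pick i) (seq i) ∧
      (η - g (seq i)) * c (pick i) ≤ κ * (g (seq (i + 1)) - g (seq i))) :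
    ∀ i, (∀ j < i, g (seq j) < θ) →
      η - g (seq i) ≤ η * exp (-((∑ v ∈ seq i, c v) / κ)) := by
  intro i
  induction i with
  | zero => intro _; simp [hseq0, hg0]
  | succ n ih =>
    intro hrun
    have hn := hrun n n.lt_succ_self
    obtain ⟨hnew, hseq, hgain⟩ := hstep n hn
    calc η - g (seq (n + 1))
        ≤ (η - g (seq n)) * exp (-(c (pick n) / κ)) :=
          le_mul_exp_neg_div_of_mul_le hκ (by linarith) (by rwa [sub_sub_sub_cancel_left])
      _ ≤ η * exp (-((∑ v ∈ seq n, c v) / κ)) * exp (-(c (pick n) / κ)) :=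
          mul_le_mul_of_nonneg_right (ih fun j hj => hrun j (hj.trans n.lt_succ_self))
            (exp_pos _).le
      _ = η * exp (-((∑ v ∈ seq (n + 1), c v) / κ)) := by
          rw [hseq, sum_insert hnew, mul_assoc, ← exp_add, add_div]
          ring_nf

lemma cost_insert_le_of_deficit_le {η ε κ : ℝ} (hε : 0 < ε) (hκ : 0 < κ) (hgle : ∀ S, g S ≤ η)
    {S : Finset X} {x : X} (hx : x ∉ S) (hS : g S < η - ε)
    (hgain : (η - g S) * c x ≤ κ * (g (insert x S) - g S))
    (hdecay : η - g S ≤ η * exp (-((∑ v ∈ S, c v) / κ))) :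
    ∑ v ∈ insert x S, c v ≤ κ * (1 + log (η / ε)) := by
  have hdeficit : 0 < η - g S := by linarith
  have hlast : c x ≤ κ := by
    refine le_of_mul_le_mul_left ?_ hdeficit
    calc (η - g S) * c x ≤ κ * (g (insert x S) - g S) := hgain
      _ ≤ κ * (η - g S) := by gcongr; exact hgle _
      _ = (η - g S) * κ := mul_comm ..
  have hprefix : ∑ v ∈ S, c v < κ * log (η / ε) :=
    lt_mul_log_div_of_lt_mul_exp hε hκ (by linarith)
  rw [sum_insert hx]
  linarith

lemma greedy_cost_le [Fintype X] {η ε : ℝ} (hg0 : g ∅ = 0)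
    (hmono : ∀ S T : Finset X, S ⊆ T → g S ≤ g T)
    (hsub : ∀ (S T : Finset X) (w : X), S ⊆ T → g (insert w T) - g T ≤ g (insert w S) - g S)
    (hgle : ∀ S, g S ≤ η) (hc : ∀ v, 0 < c v) (hε : 0 < ε) (hεη : ε < η)
    (Sstar : Finset X) (hstar : η ≤ g Sstar)
    (seq : ℕ → Finset X) (pick : ℕ → X) (hseq0 : seq 0 = ∅)
    (hstep : ∀ i, g (seq i) < η - ε →
      pick i ∉ seq i ∧ seq (i + 1) = insert (pick i) (seq i) ∧
      (∀ w ∉ seq i, (g (insert w (seq i)) - g (seq i)) / c w ≤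
        (g (insert (pick i) (seq i)) - g (seq i)) / c (pick i))) :
    ∃ l, η - ε ≤ g (seq l) ∧ ∑ v ∈ seq l, c v ≤ (∑ v ∈ Sstar, c v) * (1 + log (η / ε)) := by
  set κ := ∑ v ∈ Sstar, c v
  have hκ : 0 < κ := by
    refine sum_pos (fun v _ => hc v) (nonempty_iff_ne_empty.2 ?_)
    rintro rfl
    linarith
  have hkey : ∀ i, g (seq i) < η - ε →
      pick i ∉ seq i ∧ seq (i + 1) = insert (pick i) (seq i) ∧
      (η - g (seq i)) * c (pick i) ≤ κ * (g (seq (i + 1)) - g (seq i)) := by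
    intro i hi
    obtain ⟨hnew, hseq, hgreedy⟩ := hstep i hi
    refine ⟨hnew, hseq, hseq ▸ deficit_mul_cost_le_mul_gain g c hmono hsub hc ?_ hgreedy⟩
    exact hstar.trans (hmono _ _ subset_union_right)
  have hstop : ∃ l, η - ε ≤ g (seq l) := by
    refine exists_of_card_lt_card_succ seq _ fun i hi => ?_
    obtain ⟨hnew, hseq, -⟩ := hkey i (not_le.1 hi)
    rw [hseq, card_insert_of_notMem hnew]
    exact Nat.lt_succ_self _
  refine ⟨Nat.find hstop, Nat.find_spec hstop, ?_⟩
  have hrun : ∀ j < Nat.find hstop, g (seq j) < η - ε :=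
    fun j hj => not_le.1 (Nat.find_min hstop hj)
  obtain ⟨m, hm⟩ : ∃ m, Nat.find hstop = m + 1 := Nat.exists_eq_succ_of_ne_zero fun h0 => by
    have := Nat.find_spec hstop
    rw [h0, hseq0, hg0] at this
    linarith
  rw [hm] at hrun ⊢
  obtain ⟨hnew, hseq, hgain⟩ := hkey m (hrun m m.lt_succ_self)
  rw [hseq] at hgain ⊢
  exact cost_insert_le_of_deficit_le g c hε hκ hgle hnew (hrun m m.lt_succ_self) hgain
    (deficit_le_mul_exp_neg_cost g c hκ (by linarith) hg0 seq pick hseq0 hkey m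
      fun j hj => hrun j (hj.trans m.lt_succ_self))

end Greedy

theorem greedy_mintss_bicriteria_general {X : Type*} [DecidableEq X] [Fintype X]
    (f : Finset X → ℝ) (c : X → ℝ) (η ε : ℝ)
    (hf0 : f ∅ = 0)
    (hmono : ∀ S T : Finset X, S ⊆ T → f S ≤ f T)
    (hsub : ∀ (S T : Finset X) (w : X), S ⊆ T →
      f (insert w T) - f T ≤ f (insert w S) - f S)
    (hc : ∀ v : X, 0 < c v) (hε : 0 < ε) (hεη : ε < η)
    (Sstar : Finset X) (hstar : η ≤ f Sstar)
    (seq : ℕ → Finset X) (pick : ℕ → X)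
    (hseq0 : seq 0 = ∅)
    (hstep : ∀ i : ℕ, min (f (seq i)) η < η - ε →
      pick i ∉ seq i ∧
      seq (i + 1) = insert (pick i) (seq i) ∧
      (∀ w : X, w ∉ seq i →
        (min (f (insert w (seq i))) η - min (f (seq i)) η) / c w ≤
        (min (f (insert (pick i) (seq i))) η - min (f (seq i)) η) / c (pick i))) :
    ∃ l : ℕ, η - ε ≤ f (seq l) ∧
      ∑ v ∈ seq l, c v ≤ (∑ v ∈ Sstar, c v) * (1 + Real.log (η / ε)) := by
  have hsub_min (S T : Finset X) (w : X) (hST : S ⊆ T) :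
      min (f (insert w T)) η - min (f T) η ≤ min (f (insert w S)) η - min (f S) η :=
    min_sub_min_le_min_sub_min (hmono _ _ hST) (hmono _ _ (subset_insert w T)) (hsub S T w hST)
  obtain ⟨l, hl, hcost⟩ := greedy_cost_le (fun S => min (f S) η) c
    (by simpa [hf0] using (hε.trans hεη).le) (fun S T h => min_le_min_right η (hmono S T h))
    hsub_min (fun S => min_le_right _ _) hc hε hεη Sstar (le_min hstar le_rfl) seq pick hseq0 hstep
  exact ⟨l, hl.trans (min_le_left _ _), hcost⟩

/-- Bicriteria approximation for weighted MINTSS / real-valued submodular set cover: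
the greedy algorithm terminates with a set `S` with `f S ≥ η - ε` and
`c S ≤ c(S*) · (1 + ln (η/ε))`. -/
theorem greedy_mintss_bicriteria {X : Type*} [DecidableEq X] [Fintype X]
    (f : Finset X → ℝ) (c : X → ℝ) (η ε : ℝ)
    (hf0 : f ∅ = 0) (hnn : ∀ S : Finset X, 0 ≤ f S)
    (hmono : ∀ S T : Finset X, S ⊆ T → f S ≤ f T)
    (hsub : ∀ (S T : Finset X) (w : X), S ⊆ T →
      f (insert w T) - f T ≤ f (insert w S) - f S)
    (hc : ∀ v : X, 0 < c v) (hε : 0 < ε) (hεη : ε < η)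
    (Sstar : Finset X) (hstar : η ≤ f Sstar)
    (seq : ℕ → Finset X) (pick : ℕ → X)
    (hseq0 : seq 0 = ∅)
    (hstep : ∀ i : ℕ, min (f (seq i)) η < η - ε →
      pick i ∉ seq i ∧
      seq (i + 1) = insert (pick i) (seq i) ∧
      (∀ w : X, w ∉ seq i →
        (min (f (insert w (seq i))) η - min (f (seq i)) η) / c w ≤
        (min (f (insert (pick i) (seq i))) η - min (f (seq i)) η) / c (pick i))) :
    ∃ l : ℕ, η - ε ≤ f (seq l) ∧
      ∑ v ∈ seq l, c v ≤ (∑ v ∈ Sstar, c v) * (1 + Real.log (η / ε)) :=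
  greedy_mintss_bicriteria_general f c η ε hf0 hmono hsub hc hε hεη Sstar hstar seq pick hseq0 hstep
end

section
/- Under the hypotheses of the weighted greedy bicriteria theorem, if all costs are equal to 1 (unit costs), the greedy algorithm returns a set S with f(S) ≥ η − ε and |S| ≤ k · ⌈ln(η/ε)⌉, where k = |S*| is the size of an arbitrary set with f(S*) ≥ η. -/
/-!
Write `g S = min (f S) η` and `k = |S*|`. While `f S < η`, submodularity and monotonicity give
`η - f S ≤ f (S ∪ S*) - f S ≤ ∑_{w ∈ S*} (f (S ∪ {w}) - f S)`, so some element gains at least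
`(η - f S) / k`; the greedy choice gains at least as much in `g`, hence every greedy step
multiplies the gap `η - g S` by at most `1 - 1/k`. After `k · ⌈ln (η/ε)⌉` steps the gap is at most
`η (1 - 1/k)^(k ⌈ln (η/ε)⌉) ≤ η e^{-⌈ln (η/ε)⌉} ≤ ε`, so the algorithm has stopped by then, and
each step adds one element.
-/

open Finset Real

section Submodular

variable {X : Type*} {f : Finset X → ℝ}

theorem nonempty_of_lt_of_le (hmono : ∀ S T : Finset X, S ⊆ T → f S ≤ f T) {η : ℝ}
    {S T : Finset X} (hT : η ≤ f T) (hS : f S < η) : T.Nonempty := by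
  rw [nonempty_iff_ne_empty]
  rintro rfl
  linarith [hmono ∅ S (empty_subset S)]

variable [DecidableEq X]

theorem le_add_sum_marginal
    (hsub : ∀ (S T : Finset X) (w : X), S ⊆ T → f (insert w T) - f T ≤ f (insert w S) - f S)
    (S T : Finset X) : f (S ∪ T) ≤ f S + ∑ w ∈ T, (f (insert w S) - f S) := by
  induction T using Finset.induction_on with
  | empty => simp
  | insert a T ha ih =>
    have hgain := hsub S (S ∪ T) a subset_union_left
    rw [union_insert, sum_insert ha]
    linarith

theorem exists_marginal_ge (hmono : ∀ S T : Finset X, S ⊆ T → f S ≤ f T)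
    (hsub : ∀ (S T : Finset X) (w : X), S ⊆ T → f (insert w T) - f T ≤ f (insert w S) - f S)
    {η : ℝ} {S T : Finset X} (hT : η ≤ f T) (hS : f S < η) :
    ∃ w ∉ S, f S + (η - f S) / #T ≤ f (insert w S) := by
  have hTne := nonempty_of_lt_of_le hmono hT hS
  have hgap_le_sum : ∑ _w ∈ T, (η - f S) / #T ≤ ∑ w ∈ T, (f (insert w S) - f S) := by
    rw [sum_const, nsmul_eq_mul, mul_div_cancel₀ _ (by positivity)]
    linarith [le_add_sum_marginal hsub S T, hmono T (S ∪ T) subset_union_right]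
  obtain ⟨w, -, hw⟩ := exists_le_of_sum_le hTne hgap_le_sum
  have hpos : 0 < (η - f S) / #T := div_pos (by linarith) (by exact_mod_cast hTne.card_pos)
  refine ⟨w, fun hwS => ?_, by linarith⟩
  rw [insert_eq_of_mem hwS, sub_self] at hw
  linarith

def IsGreedyStep (f : Finset X → ℝ) (η : ℝ) (S S' : Finset X) : Prop :=
  ∃ p ∉ S, S' = insert p S ∧ ∀ w ∉ S, min (f (insert w S)) η ≤ min (f (insert p S)) η

theorem IsGreedyStep.card_eq {η : ℝ} {S S' : Finset X} (h : IsGreedyStep f η S S') :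
    #S' = #S + 1 := by
  obtain ⟨p, hp, rfl, -⟩ := h
  exact card_insert_of_notMem hp

theorem IsGreedyStep.gap_le (hmono : ∀ S T : Finset X, S ⊆ T → f S ≤ f T)
    (hsub : ∀ (S T : Finset X) (w : X), S ⊆ T → f (insert w T) - f T ≤ f (insert w S) - f S)
    {η : ℝ} {S S' T : Finset X} (hT : η ≤ f T) (hS : f S < η) (h : IsGreedyStep f η S S') :
    η - min (f S') η ≤ (η - min (f S) η) * (1 - (#T : ℝ)⁻¹) := by
  obtain ⟨p, -, rfl, hbest⟩ := h
  obtain ⟨w, hwS, hw⟩ := exists_marginal_ge hmono hsub hT hS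
  have hk : (1 : ℝ) ≤ #T := by
    exact_mod_cast (nonempty_of_lt_of_le hmono hT hS).card_pos
  have hstep_le : (η - f S) / #T ≤ η - f S :=
    div_le_self (by linarith) hk
  have hgain : f S + (η - f S) / #T ≤ min (f (insert p S)) η :=
    (le_min hw (by linarith)).trans (hbest w hwS)
  rw [min_eq_left hS.le, mul_one_sub, ← div_eq_mul_inv]
  linarith

theorem card_le_of_isGreedyStep {η : ℝ} {seq : ℕ → Finset X} (hseq0 : seq 0 = ∅) {i : ℕ}
    (hrun : ∀ j < i, IsGreedyStep f η (seq j) (seq (j + 1))) : #(seq i) ≤ i := by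
  induction i with
  | zero => simp [hseq0]
  | succ i ih =>
    rw [(hrun i i.lt_succ_self).card_eq]
    exact Nat.succ_le_succ (ih fun j hj => hrun j (hj.trans i.lt_succ_self))

theorem gap_le_pow_of_isGreedyStep (hmono : ∀ S T : Finset X, S ⊆ T → f S ≤ f T)
    (hsub : ∀ (S T : Finset X) (w : X), S ⊆ T → f (insert w T) - f T ≤ f (insert w S) - f S)
    {η : ℝ} {T : Finset X} (hT : η ≤ f T) {seq : ℕ → Finset X} {i : ℕ}
    (hrun : ∀ j < i, f (seq j) < η ∧ IsGreedyStep f η (seq j) (seq (j + 1))) :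
    η - min (f (seq i)) η ≤ (η - min (f (seq 0)) η) * (1 - (#T : ℝ)⁻¹) ^ i := by
  induction i with
  | zero => simp
  | succ i ih =>
    obtain ⟨hlt, hgreedy⟩ := hrun i i.lt_succ_self
    calc η - min (f (seq (i + 1))) η ≤ (η - min (f (seq i)) η) * (1 - (#T : ℝ)⁻¹) :=
          hgreedy.gap_le hmono hsub hT hlt
      _ ≤ (η - min (f (seq 0)) η) * (1 - (#T : ℝ)⁻¹) ^ i * (1 - (#T : ℝ)⁻¹) :=
          mul_le_mul_of_nonneg_right (ih fun j hj => hrun j (hj.trans i.lt_succ_self))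
            (sub_nonneg.2 (Nat.cast_inv_le_one _))
      _ = (η - min (f (seq 0)) η) * (1 - (#T : ℝ)⁻¹) ^ (i + 1) := by ring

end Submodular

theorem one_sub_inv_pow_mul_le_exp_neg {k : ℕ} (hk : k ≠ 0) (n : ℕ) :
    (1 - (k : ℝ)⁻¹) ^ (k * n) ≤ exp (-n) := by
  have hbase : (1 - (k : ℝ)⁻¹) ^ k ≤ exp (-1) := by
    simpa only [one_div] using
      one_sub_div_pow_le_exp_neg (n := k) (t := 1) (by exact_mod_cast Nat.one_le_iff_ne_zero.2 hk)
  calc (1 - (k : ℝ)⁻¹) ^ (k * n) = ((1 - (k : ℝ)⁻¹) ^ k) ^ n := pow_mul _ _ _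
    _ ≤ exp (-1) ^ n :=
        pow_le_pow_left₀ (pow_nonneg (sub_nonneg.2 (Nat.cast_inv_le_one _)) _) hbase n
    _ = exp (-n) := by rw [← exp_nat_mul, mul_neg_one]

theorem exp_neg_ceil_log_le {x : ℝ} (hx : 0 < x) : exp (-⌈log x⌉₊) ≤ x⁻¹ := by
  rw [← exp_log (inv_pos.2 hx), log_inv, exp_le_exp, neg_le_neg_iff]
  exact Nat.le_ceil _

theorem mul_one_sub_inv_pow_mul_ceil_log_le {k : ℕ} (hk : k ≠ 0) {η ε : ℝ} (hη : 0 < η)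
    (hε : 0 < ε) : η * (1 - (k : ℝ)⁻¹) ^ (k * ⌈log (η / ε)⌉₊) ≤ ε :=
  calc η * (1 - (k : ℝ)⁻¹) ^ (k * ⌈log (η / ε)⌉₊) ≤ η * (η / ε)⁻¹ := by
        gcongr
        exact (one_sub_inv_pow_mul_le_exp_neg hk _).trans (exp_neg_ceil_log_le (div_pos hη hε))
    _ = ε := by field_simp

theorem greedy_mintss_unit_cost_general {X : Type*} [DecidableEq X]
    (f : Finset X → ℝ) (η ε : ℝ)
    (hf0 : f ∅ = 0)
    (hmono : ∀ S T : Finset X, S ⊆ T → f S ≤ f T)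
    (hsub : ∀ (S T : Finset X) (w : X), S ⊆ T →
      f (insert w T) - f T ≤ f (insert w S) - f S)
    (hε : 0 < ε) (hεη : ε < η)
    (Sstar : Finset X) (hstar : η ≤ f Sstar)
    (seq : ℕ → Finset X) (pick : ℕ → X)
    (hseq0 : seq 0 = ∅)
    (hstep : ∀ i : ℕ, min (f (seq i)) η < η - ε →
      pick i ∉ seq i ∧
      seq (i + 1) = insert (pick i) (seq i) ∧
      (∀ w : X, w ∉ seq i →
        min (f (insert w (seq i))) η - min (f (seq i)) η ≤
        min (f (insert (pick i) (seq i))) η - min (f (seq i)) η)) :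
    ∃ l : ℕ, η - ε ≤ f (seq l) ∧
      ((seq l).card : ℝ) ≤ (Sstar.card : ℝ) * (⌈Real.log (η / ε)⌉₊ : ℝ) := by
  have hη : 0 < η := hε.trans hεη
  set L := #Sstar * ⌈log (η / ε)⌉₊
  have hrun : ∀ i, (∀ j < i, min (f (seq j)) η < η - ε) →
      ∀ j < i, f (seq j) < η ∧ IsGreedyStep f η (seq j) (seq (j + 1)) := by
    intro i hactive j hj
    obtain ⟨hpick, hsucc, hbest⟩ := hstep j (hactive j hj)
    refine ⟨?_, pick j, hpick, hsucc, fun w hw => by linarith [hbest w hw]⟩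
    rcases min_lt_iff.1 (hactive j hj) with h | h <;> linarith
  have hstop : ∃ l ≤ L, η - ε ≤ min (f (seq l)) η := by
    by_contra! hactive
    have hk : #Sstar ≠ 0 :=
      card_ne_zero.2 (nonempty_of_lt_of_le (S := ∅) hmono hstar (by rw [hf0]; exact hη))
    have hgap := gap_le_pow_of_isGreedyStep hmono hsub hstar
      (hrun L fun j hj => hactive j hj.le)
    rw [hseq0, hf0, min_eq_left hη.le, sub_zero] at hgap
    linarith [hactive L le_rfl, mul_one_sub_inv_pow_mul_ceil_log_le hk hη hε]
  obtain ⟨hlL, hl⟩ := Nat.find_spec hstop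
  have hfirst : ∀ j < Nat.find hstop, min (f (seq j)) η < η - ε := fun j hj =>
    not_le.1 fun hj' => Nat.find_min hstop hj ⟨(hj.trans_le hlL).le, hj'⟩
  refine ⟨Nat.find hstop, hl.trans (min_le_left _ _), ?_⟩
  have hcard := card_le_of_isGreedyStep hseq0 fun j hj => (hrun _ hfirst j hj).2
  exact_mod_cast hcard.trans hlL

/-- Unit-cost greedy bicriteria: the greedy algorithm returns `S` with `f S ≥ η - ε` and
`|S| ≤ k · ⌈ln (η/ε)⌉` where `k = |S*|` is the size of any set with `f S* ≥ η`. -/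
theorem greedy_mintss_unit_cost {X : Type*} [DecidableEq X] [Fintype X]
    (f : Finset X → ℝ) (η ε : ℝ)
    (hf0 : f ∅ = 0) (hnn : ∀ S : Finset X, 0 ≤ f S)
    (hmono : ∀ S T : Finset X, S ⊆ T → f S ≤ f T)
    (hsub : ∀ (S T : Finset X) (w : X), S ⊆ T →
      f (insert w T) - f T ≤ f (insert w S) - f S)
    (hε : 0 < ε) (hεη : ε < η)
    (Sstar : Finset X) (hstar : η ≤ f Sstar)
    (seq : ℕ → Finset X) (pick : ℕ → X)
    (hseq0 : seq 0 = ∅)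
    (hstep : ∀ i : ℕ, min (f (seq i)) η < η - ε →
      pick i ∉ seq i ∧
      seq (i + 1) = insert (pick i) (seq i) ∧
      (∀ w : X, w ∉ seq i →
        min (f (insert w (seq i))) η - min (f (seq i)) η ≤
        min (f (insert (pick i) (seq i))) η - min (f (seq i)) η)) :
    ∃ l : ℕ, η - ε ≤ f (seq l) ∧
      ((seq l).card : ℝ) ≤ (Sstar.card : ℝ) * (⌈Real.log (η / ε)⌉₊ : ℝ) :=
  greedy_mintss_unit_cost_general f η ε hf0 hmono hsub hε hεη Sstar hstar seq pick hseq0 hstep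
end

section
/- For any δ ∈ [0,1), k ≥ 1, define δ' = δ / (1 − (1−δ)(1−1/k)). Then 0 ≤ δ' < 1, and for any η > ε > 0 with δ'·η < ε, any sequence η_i ≤ η·e^{−i/k}(1−δ') + δ'·η reaches η_l ≤ ε within l ≤ k·(1 + ln(η(1−δ')/(ε(1 − δ'η/ε)))) steps. -/
/-! Writing `C = η(1-δ')/(ε - δ'η) ≥ 1`, the bound on `η_l` drops to `ε` as soon as
`e^{-l/k} ≤ C⁻¹`, i.e. for `l = ⌈k log C⌉`, and `⌈k log C⌉ ≤ k log C + 1 ≤ k (1 + log C)`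
because `k ≥ 1`. -/

open Real

lemma one_sub_mul_one_sub_inv_eq (δ k : ℝ) (hk : k ≠ 0) :
    1 - (1 - δ) * (1 - 1 / k) = δ + (1 - δ) / k := by
  field_simp
  ring

lemma div_one_sub_mul_one_sub_inv_mem_Ico {δ k : ℝ} (hδ0 : 0 ≤ δ) (hδ1 : δ < 1) (hk : 0 < k) :
    δ / (1 - (1 - δ) * (1 - 1 / k)) ∈ Set.Ico 0 1 := by
  rw [one_sub_mul_one_sub_inv_eq δ k hk.ne']
  have hrest : 0 < (1 - δ) / k := div_pos (by linarith) hk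
  have hden : 0 < δ + (1 - δ) / k := by linarith
  exact ⟨div_nonneg hδ0 hden.le, (div_lt_one hden).mpr (by linarith)⟩

lemma exp_neg_div_le_inv_of_mul_log_le {k C l : ℝ} (hk : 0 < k) (hC : 0 < C)
    (hl : k * log C ≤ l) : exp (-l / k) ≤ C⁻¹ := by
  have hexponent : -l / k ≤ -log C := by
    rw [div_le_iff₀ hk]
    linarith
  calc exp (-l / k) ≤ exp (-log C) := exp_le_exp.mpr hexponent
    _ = C⁻¹ := by rw [exp_neg, exp_log hC]

lemma exists_le_of_le_mul_exp_add {k A B ε : ℝ} (hk : 1 ≤ k) (hBε : B < ε) (hA : ε - B ≤ A)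
    (a : ℕ → ℝ) (ha : ∀ i : ℕ, a i ≤ A * exp (-(i : ℝ) / k) + B) :
    ∃ l : ℕ, a l ≤ ε ∧ (l : ℝ) ≤ k * (1 + log (A / (ε - B))) := by
  have hk0 : 0 < k := one_pos.trans_le hk
  have hgap : 0 < ε - B := sub_pos.mpr hBε
  set C := A / (ε - B) with hC_def
  have hC : 1 ≤ C := (one_le_div hgap).mpr hA
  have hlogC : 0 ≤ k * log C := mul_nonneg hk0.le (log_nonneg hC)
  refine ⟨⌈k * log C⌉₊, ?_, ?_⟩
  · have hexp := exp_neg_div_le_inv_of_mul_log_le hk0 (one_pos.trans_le hC) (Nat.le_ceil _)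
    calc a ⌈k * log C⌉₊ ≤ A * exp (-(⌈k * log C⌉₊ : ℝ) / k) + B := ha _
      _ ≤ A * C⁻¹ + B := by gcongr; linarith
      _ = ε := by rw [hC_def, inv_div, mul_div_cancel₀ _ (by linarith)]; ring
  · have hceil := (Nat.ceil_lt_add_one hlogC).le
    nlinarith [log_nonneg hC]

/-- With `δ' = δ / (1 - (1-δ)(1-1/k))` one has `0 ≤ δ' < 1`, and for `η > ε > 0` with
`δ'η < ε`, any sequence with `η_i ≤ η e^{-i/k}(1-δ') + δ'η` reaches `η_l ≤ ε` within
`l ≤ k·(1 + ln(η(1-δ')/(ε(1 - δ'η/ε))))` steps. -/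
theorem approx_iteration_bound (δ k δ' : ℝ)
    (hδ0 : 0 ≤ δ) (hδ1 : δ < 1) (hk : 1 ≤ k)
    (hδ' : δ' = δ / (1 - (1 - δ) * (1 - 1 / k))) :
    0 ≤ δ' ∧ δ' < 1 ∧
    ∀ η ε : ℝ, 0 < ε → ε < η → δ' * η < ε →
      ∀ a : ℕ → ℝ,
        (∀ i : ℕ, a i ≤ η * Real.exp (-(i : ℝ) / k) * (1 - δ') + δ' * η) →
        ∃ l : ℕ, a l ≤ ε ∧
          (l : ℝ) ≤ k * (1 + Real.log (η * (1 - δ') / (ε * (1 - δ' * η / ε)))) := by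
  obtain ⟨hδ'0, hδ'1⟩ : 0 ≤ δ' ∧ δ' < 1 :=
    hδ' ▸ div_one_sub_mul_one_sub_inv_mem_Ico hδ0 hδ1 (one_pos.trans_le hk)
  refine ⟨hδ'0, hδ'1, fun η ε hε hεη hδ'η a ha => ?_⟩
  have hgap : ε * (1 - δ' * η / ε) = ε - δ' * η := by field_simp
  rw [hgap]
  exact exists_le_of_le_mul_exp_add hk hδ'η (by linarith) a
    fun i => (ha i).trans_eq (by ring)
end

section
/- In the bipartite reduction graph: let U be a finite universe, 𝒮 a family of subsets of U, and G the directed bipartite graph with class-A nodes {v_S : S ∈ 𝒮}, class-B nodes {v_u : u ∈ U}, and an edge from v_S to v_u iff u ∈ S. Then for any x and y: there exist x sets in 𝒮 whose union has size at least y if and only if there exists a set of x nodes in G that 1-covers at least y + x nodes (where a set of nodes 1-covers all nodes at directed distance ≤ 1 from it, including themselves). -/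
/-!
A node set `T` covers its own nodes, and on the element side exactly the elements of the sets it
picks from `𝒮`. So picking `x` sets covers `x` set-nodes plus their union, while any `x` nodes
cover at most `x` nodes plus the union of the (at most `x`) sets among them; padding those sets
to exactly `x` sets of `𝒮` only enlarges the union.
-/

open Classical in
/-- The set of nodes 1-covered by `T` in the bipartite reduction graph: class-A nodes are
subsets `S ∈ 𝒮` (left summand), class-B nodes are elements of `U` (right summand), with an
edge from `Sum.inl s` to `Sum.inr u` iff `s ∈ 𝒮` and `u ∈ s`. Each node covers itself. -/
noncomputable def oneCovered {U : Type*} [Fintype U] [DecidableEq U]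
    (𝒮 : Finset (Finset U)) (T : Finset (Finset U ⊕ U)) : Finset (Finset U ⊕ U) :=
  Finset.univ.filter (fun w => w ∈ T ∨
    ∃ s ∈ 𝒮, ∃ u : U, Sum.inl s ∈ T ∧ u ∈ s ∧ w = Sum.inr u)

open Finset

section

variable {U : Type*} [Fintype U] [DecidableEq U] (𝒮 : Finset (Finset U))

theorem oneCovered_eq_disjSum (T : Finset (Finset U ⊕ U)) :
    oneCovered 𝒮 T = T.toLeft.disjSum (T.toRight ∪ (𝒮 ∩ T.toLeft).sup id) := by
  ext (s | u) <;> simp [oneCovered, mem_sup, and_assoc]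

theorem card_oneCovered_le (T : Finset (Finset U ⊕ U)) :
    #(oneCovered 𝒮 T) ≤ #T + #((𝒮 ∩ T.toLeft).sup id) := by
  rw [oneCovered_eq_disjSum, card_disjSum, ← card_toLeft_add_card_toRight, add_assoc]
  exact Nat.add_le_add_left (card_union_le _ _) _

theorem card_oneCovered_map_inl {C : Finset (Finset U)} (hC : C ⊆ 𝒮) :
    #(oneCovered 𝒮 (C.map .inl)) = #C + #(C.sup id) := by
  rw [oneCovered_eq_disjSum, ← disjSum_empty, toLeft_disjSum, toRight_disjSum,
    inter_eq_right.mpr hC, empty_union, card_disjSum]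

end

/-- Bipartite reduction: there exist `x` sets in `𝒮` whose union has size at least `y`
iff there is a set of `x` nodes in the reduction graph that 1-covers at least
`y + x` nodes. -/
theorem bipartite_reduction {U : Type*} [Fintype U] [DecidableEq U]
    (𝒮 : Finset (Finset U)) (x y : ℕ) (hx : x ≤ 𝒮.card) :
    (∃ C : Finset (Finset U), C ⊆ 𝒮 ∧ C.card = x ∧ y ≤ (C.sup id).card) ↔
    (∃ T : Finset (Finset U ⊕ U), T.card = x ∧ y + x ≤ (oneCovered 𝒮 T).card) := by
  constructor
  · rintro ⟨C, hC𝒮, rfl, hy⟩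
    refine ⟨C.map .inl, card_map _, ?_⟩
    rw [card_oneCovered_map_inl 𝒮 hC𝒮]
    omega
  · rintro ⟨T, rfl, hy⟩
    have hyA : y ≤ #((𝒮 ∩ T.toLeft).sup id) := by
      have := card_oneCovered_le 𝒮 T
      omega
    have hA : #(𝒮 ∩ T.toLeft) ≤ #T := (card_le_card inter_subset_right).trans card_toLeft_le
    obtain ⟨C, hAC, hC𝒮, hC⟩ := exists_subsuperset_card_eq inter_subset_left hA hx
    exact ⟨C, hC𝒮, hC, hyA.trans (card_le_card (sup_mono hAC))⟩
end
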